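/- Let p ∈ (1, ∞) with p ≠ 2, set b = 1/(p−2), let k ∈ ℝ, and let f be a twice differentiable real-valued function on an open interval I. Define U(r,φ) = r^k · f(φ) for r > 0 and φ ∈ I. Then for every r > 0 and φ ∈ I, the polar p-Laplace expression (b+1)·U_r²·U_rr + (b/r²)·(U_rr·U_φ² + U_r²·U_φφ) + ((b+1)/r⁴)·U_φ²·U_φφ + (b/r)·U_r³ + ((b−1)/r³)·U_r·U_φ² + (2/r²)·U_r·U_φ·U_rφ vanishes at (r,φ) if and only if f satisfies the separation equation with parameters (k,b) at φ. -/
import Mathlib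


open Real Set

/-- The separation equation with parameters `(k, b)` for a function `f` at angle `φ`:
`((b+1) f'² + b k² f²) f'' + (2k + bk − 1) k f f'² + (bk + k − 1) k³ f³ = 0`. -/
def SepEq (k b : ℝ) (f : ℝ → ℝ) (φ : ℝ) : Prop :=
  ((b + 1) * (deriv f φ)^2 + b * k^2 * (f φ)^2) * deriv (deriv f) φ
    + (2*k + b*k - 1) * k * f φ * (deriv f φ)^2
    + (b*k + k - 1) * k^3 * (f φ)^3 = 0

/-- `U_r`. -/
noncomputable def Ur (U : ℝ → ℝ → ℝ) (r φ : ℝ) : ℝ := deriv (fun s => U s φ) r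
/-- `U_φ`. -/
noncomputable def Uphi (U : ℝ → ℝ → ℝ) (r φ : ℝ) : ℝ := deriv (fun t => U r t) φ
/-- `U_rr`. -/
noncomputable def Urr (U : ℝ → ℝ → ℝ) (r φ : ℝ) : ℝ := deriv (fun s => Ur U s φ) r
/-- `U_φφ`. -/
noncomputable def Uphiphi (U : ℝ → ℝ → ℝ) (r φ : ℝ) : ℝ := deriv (fun t => Uphi U r t) φ
/-- `U_rφ`. -/
noncomputable def Urphi (U : ℝ → ℝ → ℝ) (r φ : ℝ) : ℝ := deriv (fun t => Ur U r t) φ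

theorem statement_13 (p b k A B : ℝ) (hp1 : 1 < p) (hp2 : p ≠ 2) (hb : b = 1/(p - 2))
    (f : ℝ → ℝ)
    (hf : ∀ φ ∈ Set.Ioo A B, DifferentiableAt ℝ f φ ∧ DifferentiableAt ℝ (deriv f) φ)
    (U : ℝ → ℝ → ℝ) (hU : ∀ r φ : ℝ, U r φ = r ^ k * f φ)
    (r φ : ℝ) (hr : 0 < r) (hφ : φ ∈ Set.Ioo A B) :
    ((b + 1) * (Ur U r φ)^2 * Urr U r φ
        + b / r^2 * (Urr U r φ * (Uphi U r φ)^2 + (Ur U r φ)^2 * Uphiphi U r φ)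
        + (b + 1) / r^4 * (Uphi U r φ)^2 * Uphiphi U r φ
        + b / r * (Ur U r φ)^3
        + (b - 1) / r^3 * Ur U r φ * (Uphi U r φ)^2
        + 2 / r^2 * Ur U r φ * Uphi U r φ * Urphi U r φ = 0)
      ↔ SepEq k b f φ := by

  have hrne : r ≠ 0 := hr.ne'
  -- Ur at any angle
  have hUrfun : ∀ t, Ur U r t = k * r ^ (k - 1) * f t := by
    intro t
    have h1 : (fun s : ℝ => U s t) = fun s : ℝ => s ^ k * f t := by
      funext s; rw [hU]
    rw [Ur, h1]
    exact ((Real.hasDerivAt_rpow_const (p := k) (Or.inl hrne)).mul_const (f t)).deriv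
  -- Urr
  have hUrr : Urr U r φ = k * ((k - 1) * r ^ (k - 1 - 1)) * f φ := by
    have hev : (fun s => Ur U s φ) =ᶠ[nhds r] fun s => k * s ^ (k - 1) * f φ := by
      filter_upwards [Ioi_mem_nhds hr] with s hs
      have h1 : (fun s' : ℝ => U s' φ) = fun s' : ℝ => s' ^ k * f φ := by
        funext s'; rw [hU]
      rw [Ur, h1]
      exact ((Real.hasDerivAt_rpow_const (p := k) (Or.inl (ne_of_gt hs))).mul_const (f φ)).deriv
    rw [Urr, hev.deriv_eq]
    exact (((Real.hasDerivAt_rpow_const (p := k - 1) (Or.inl hrne)).const_mul k).mul_const (f φ)).deriv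
  -- Uphi at any angle
  have hUphifun : ∀ t, Uphi U r t = r ^ k * deriv f t := by
    intro t
    have h1 : (fun t' : ℝ => U r t') = fun t' : ℝ => r ^ k * f t' := by
      funext t'; rw [hU]
    rw [Uphi, h1, deriv_const_mul_field]
  have hUphiphi : Uphiphi U r φ = r ^ k * deriv (deriv f) φ := by
    have h1 : (fun t => Uphi U r t) = fun t => r ^ k * deriv f t := funext hUphifun
    rw [Uphiphi, h1, deriv_const_mul_field]
  have hUrphi : Urphi U r φ = k * r ^ (k - 1) * deriv f φ := by
    have h1 : (fun t => Ur U r t) = fun t => k * r ^ (k - 1) * f t := funext hUrfun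
    rw [Urphi, h1, deriv_const_mul_field]
  have e1 : r ^ (k - 1) = r ^ k / r := by
    rw [Real.rpow_sub hr, Real.rpow_one]
  have e2 : r ^ (k - 1 - 1) = r ^ k / r / r := by
    rw [Real.rpow_sub hr, Real.rpow_sub hr, Real.rpow_one]
  have hx : r ^ k ≠ 0 := (Real.rpow_pos_of_pos hr k).ne'
  rw [hUrfun, hUrr, hUphifun, hUphiphi, hUrphi, e1, e2, SepEq]
  set X := r ^ k with hX
  set F := f φ
  set F' := deriv f φ
  set F'' := deriv (deriv f) φ
  have key : (b + 1) * (k * (X / r) * F) ^ 2 * (k * ((k - 1) * (X / r / r)) * F)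
        + b / r ^ 2 * (k * ((k - 1) * (X / r / r)) * F * (X * F') ^ 2
            + (k * (X / r) * F) ^ 2 * (X * F''))
        + (b + 1) / r ^ 4 * (X * F') ^ 2 * (X * F'')
        + b / r * (k * (X / r) * F) ^ 3
        + (b - 1) / r ^ 3 * (k * (X / r) * F) * (X * F') ^ 2
        + 2 / r ^ 2 * (k * (X / r) * F) * (X * F') * (k * (X / r) * F')
      = X ^ 3 / r ^ 4 *
        (((b + 1) * F' ^ 2 + b * k ^ 2 * F ^ 2) * F''
          + (2 * k + b * k - 1) * k * F * F' ^ 2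
          + (b * k + k - 1) * k ^ 3 * F ^ 3) := by
    field_simp
    ring
  rw [key, mul_eq_zero, div_eq_zero_iff]
  simp [hx, hrne, pow_eq_zero_iff]
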